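/- Let G : ℝ² → ℝ be a locally integrable ℤ²-periodic function satisfying G(x₁,x₂) = G(x₂,x₁), G(−x₁,x₂) = G(x₁,x₂) and G(x₁,−x₂) = G(x₁,x₂) for all (x₁,x₂), and let θ : ℝ² → ℝ be a smooth ℤ²-periodic function with the same three symmetries. Let (G∗θ)(x) = ∫_{[−1/2,1/2]²} G(x−y) θ(y) dy. Then ∫_{[−1/2,1/2]²} (∂₁(G∗θ)(x))² dx = ∫_{[−1/2,1/2]²} (∂₂(G∗θ)(x))² dx and ∫_{[−1/2,1/2]²} ∂₁(G∗θ)(x) · ∂₂(G∗θ)(x) dx = 0. Consequently, for Γ > 0 and σ_H = Γ ∇⊥(G∗θ), the 2×2 matrix Q_H(0) = ∫_{[−1/2,1/2]²} σ_H(x) ⊗ σ_H(x) dx equals 2κ I₂ with κ = (1/4)∫_{[−1/2,1/2]²} |σ_H(x)|² dx. -/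

import Mathlib

open MeasureTheory

noncomputable section

/-- fundamental domain [−1/2,1/2]² of the torus T². -/
def D2 : Set (ℝ × ℝ) := Set.Icc (-(1/2) : ℝ) (1/2) ×ˢ Set.Icc (-(1/2) : ℝ) (1/2)

/-- ℤ²-periodicity of a function on ℝ². -/
def Periodic2 {α : Type*} (f : ℝ × ℝ → α) : Prop :=
  ∀ x : ℝ × ℝ, ∀ m n : ℤ, f (x.1 + (m : ℝ), x.2 + (n : ℝ)) = f x

/-- partial derivative ∂₁. -/
def d1 (f : ℝ × ℝ → ℝ) (x : ℝ × ℝ) : ℝ := fderiv ℝ f x (1, 0)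

/-- partial derivative ∂₂. -/
def d2 (f : ℝ × ℝ → ℝ) (x : ℝ × ℝ) : ℝ := fderiv ℝ f x (0, 1)

/-- perpendicular gradient ∇⊥f = (∂₂f, −∂₁f). -/
def gradPerp (f : ℝ × ℝ → ℝ) (x : ℝ × ℝ) : ℝ × ℝ := (d2 f x, - d1 f x)

/-- convolution on the torus: (f∗g)(x) = ∫_{[−1/2,1/2]²} f(x−y) g(y) dy. -/
def convT (f g : ℝ × ℝ → ℝ) (x : ℝ × ℝ) : ℝ := ∫ y in D2, f (x - y) * g y

/-- components of a vector in ℝ². -/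
def vc (v : ℝ × ℝ) : Fin 2 → ℝ := ![v.1, v.2]

/-- the symmetries of G and θ : invariance under swapping coordinates and under
reflection of each coordinate. -/
def SymmAll (f : ℝ × ℝ → ℝ) : Prop :=
  (∀ x : ℝ × ℝ, f (x.2, x.1) = f x) ∧
  (∀ x : ℝ × ℝ, f (-x.1, x.2) = f x) ∧
  (∀ x : ℝ × ℝ, f (x.1, -x.2) = f x)

/-! ### Auxiliary lemmas -/

namespace Stmt2Aux

/-- swap as a continuous linear equiv. -/
def swE : (ℝ × ℝ) ≃L[ℝ] (ℝ × ℝ) := ContinuousLinearEquiv.prodComm ℝ ℝ ℝ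

/-- reflection of the first coordinate as a continuous linear equiv. -/
def n1E : (ℝ × ℝ) ≃L[ℝ] (ℝ × ℝ) :=
  (ContinuousLinearEquiv.neg ℝ).prodCongr (ContinuousLinearEquiv.refl ℝ ℝ)

lemma swE_apply (x : ℝ × ℝ) : swE x = (x.2, x.1) := rfl

lemma n1E_apply (x : ℝ × ℝ) : n1E x = (-x.1, x.2) := rfl

lemma sw_measurePreserving :
    MeasurePreserving (Prod.swap : ℝ × ℝ → ℝ × ℝ) volume volume := by
  exact Measure.measurePreserving_swap

lemma sw_emb : MeasurableEmbedding (Prod.swap : ℝ × ℝ → ℝ × ℝ) :=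
  MeasurableEquiv.prodComm.measurableEmbedding

lemma sw_preimage : (Prod.swap : ℝ × ℝ → ℝ × ℝ) ⁻¹' D2 = D2 := by
  ext p
  simp only [D2, Set.mem_preimage, Set.mem_prod, Set.mem_Icc, Prod.fst_swap, Prod.snd_swap]
  tauto

lemma n1_measurePreserving :
    MeasurePreserving (Prod.map (Neg.neg : ℝ → ℝ) (id : ℝ → ℝ)) volume volume := by
  exact (Measure.measurePreserving_neg _).prod (MeasurePreserving.id _)

lemma n1_emb : MeasurableEmbedding (Prod.map (Neg.neg : ℝ → ℝ) (id : ℝ → ℝ)) :=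
  ((MeasurableEquiv.neg ℝ).prodCongr (MeasurableEquiv.refl ℝ)).measurableEmbedding

lemma n1_preimage : (Prod.map (Neg.neg : ℝ → ℝ) (id : ℝ → ℝ)) ⁻¹' D2 = D2 := by
  ext p
  simp only [D2, Set.mem_preimage, Set.mem_prod, Set.mem_Icc, Prod.map_fst, Prod.map_snd,
    id_eq]
  constructor
  · rintro ⟨⟨h1, h2⟩, h3⟩; exact ⟨⟨by linarith, by linarith⟩, h3⟩
  · rintro ⟨⟨h1, h2⟩, h3⟩; exact ⟨⟨by linarith, by linarith⟩, h3⟩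

/-- substitution `y ↦ (y₂, y₁)` in an integral over `D2`. -/
lemma integral_D2_swap (h : ℝ × ℝ → ℝ) :
    (∫ x in D2, h (x.2, x.1)) = ∫ x in D2, h x := by
  have := sw_measurePreserving.setIntegral_preimage_emb sw_emb h D2
  rwa [sw_preimage] at this

/-- substitution `y ↦ (−y₁, y₂)` in an integral over `D2`. -/
lemma integral_D2_neg1 (h : ℝ × ℝ → ℝ) :
    (∫ x in D2, h (-x.1, x.2)) = ∫ x in D2, h x := by
  have := n1_measurePreserving.setIntegral_preimage_emb n1_emb h D2
  rwa [n1_preimage] at this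

lemma integrableOn_D2_swap (h : ℝ × ℝ → ℝ) :
    IntegrableOn (fun x : ℝ × ℝ => h (x.2, x.1)) D2 volume ↔ IntegrableOn h D2 volume := by
  have := sw_measurePreserving.integrableOn_comp_preimage (f := h) (s := D2) sw_emb
  rwa [sw_preimage] at this

/-- The convolution inherits the swap symmetry. -/
lemma conv_swap {G θ : ℝ × ℝ → ℝ} (hGs : SymmAll G) (hθs : SymmAll θ) (x : ℝ × ℝ) :
    convT G θ (x.2, x.1) = convT G θ x := by
  unfold convT
  rw [← integral_D2_swap (fun y => G ((x.2, x.1) - y) * θ y)]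
  refine integral_congr_ae (Filter.Eventually.of_forall fun y => ?_)
  show G ((x.2, x.1) - (y.2, y.1)) * θ (y.2, y.1) = G (x - y) * θ y
  have h1 : ((x.2, x.1) - ((y.2 : ℝ), (y.1 : ℝ)) : ℝ × ℝ) = ((x - y).2, (x - y).1) := rfl
  rw [h1, hGs.1 (x - y), hθs.1 y]

/-- The convolution inherits the reflection symmetry in the first coordinate. -/
lemma conv_neg1 {G θ : ℝ × ℝ → ℝ} (hGs : SymmAll G) (hθs : SymmAll θ) (x : ℝ × ℝ) :
    convT G θ (-x.1, x.2) = convT G θ x := by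
  unfold convT
  rw [← integral_D2_neg1 (fun y => G ((-x.1, x.2) - y) * θ y)]
  refine integral_congr_ae (Filter.Eventually.of_forall fun y => ?_)
  show G ((-x.1, x.2) - (-y.1, y.2)) * θ (-y.1, y.2) = G (x - y) * θ y
  have h1 : ((-x.1, x.2) - ((-y.1 : ℝ), (y.2 : ℝ)) : ℝ × ℝ) = (-(x - y).1, (x - y).2) := by
    simp [Prod.ext_iff]; ring
  rw [h1, hGs.2.1 (x - y), hθs.2.1 y]

/-- derivatives under the swap symmetry. -/
lemma d_swap {f : ℝ × ℝ → ℝ} (hf : ∀ x : ℝ × ℝ, f (x.2, x.1) = f x) (x : ℝ × ℝ) :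
    d1 f x = d2 f (x.2, x.1) ∧ d2 f x = d1 f (x.2, x.1) := by
  have hfe : f ∘ (swE : ℝ × ℝ → ℝ × ℝ) = f := funext fun y => hf y
  have key : fderiv ℝ f x = (fderiv ℝ f (swE x)).comp (swE : (ℝ × ℝ) →L[ℝ] (ℝ × ℝ)) := by
    conv_lhs => rw [← hfe]
    exact swE.comp_right_fderiv
  constructor
  · show fderiv ℝ f x (1, 0) = fderiv ℝ f (x.2, x.1) (0, 1)
    rw [key]; rfl
  · show fderiv ℝ f x (0, 1) = fderiv ℝ f (x.2, x.1) (1, 0)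
    rw [key]; rfl

/-- derivatives under the reflection symmetry. -/
lemma d_neg1 {f : ℝ × ℝ → ℝ} (hf : ∀ x : ℝ × ℝ, f (-x.1, x.2) = f x) (x : ℝ × ℝ) :
    d1 f (-x.1, x.2) = - d1 f x ∧ d2 f (-x.1, x.2) = d2 f x := by
  have hfe : f ∘ (n1E : ℝ × ℝ → ℝ × ℝ) = f := funext fun y => hf y
  have key : fderiv ℝ f x = (fderiv ℝ f (n1E x)).comp (n1E : (ℝ × ℝ) →L[ℝ] (ℝ × ℝ)) := by
    conv_lhs => rw [← hfe]
    exact n1E.comp_right_fderiv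
  have h1 : d1 f x = - d1 f (-x.1, x.2) := by
    show fderiv ℝ f x (1, 0) = - fderiv ℝ f (-x.1, x.2) (1, 0)
    rw [key]
    have : ((n1E : (ℝ × ℝ) →L[ℝ] (ℝ × ℝ)) (1, 0) : ℝ × ℝ) = -(1, 0) := by
      simp [Prod.ext_iff, n1E]
    rw [ContinuousLinearMap.comp_apply, this, map_neg]
    rfl
  have h2 : d2 f x = d2 f (-x.1, x.2) := by
    show fderiv ℝ f x (0, 1) = fderiv ℝ f (-x.1, x.2) (0, 1)
    rw [key, ContinuousLinearMap.comp_apply]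
    congr 1
    show ((-(0:ℝ), (1:ℝ)) : ℝ × ℝ) = (0, 1)
    simp
  exact ⟨by rw [h1]; ring, h2.symm⟩

end Stmt2Aux

open Stmt2Aux

/-- for a symmetric kernel G and a smooth symmetric θ, the
diagonal entries of the horizontal covariance agree, the off-diagonal entries
vanish, and `Q_H(0) = 2κ I₂` with `κ = (1/4)∫|σ_H|²`, where
`σ_H = Γ ∇⊥(G∗θ)`. -/
theorem statement2
    (G θ : ℝ × ℝ → ℝ) (Γ : ℝ) (hΓ : 0 < Γ)
    (hGli : LocallyIntegrable G volume) (hGp : Periodic2 G) (hGs : SymmAll G)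
    (hθ : ContDiff ℝ (⊤ : ℕ∞) θ) (hθp : Periodic2 θ) (hθs : SymmAll θ) :
    (∫ x in D2, (d1 (convT G θ) x)^2) = (∫ x in D2, (d2 (convT G θ) x)^2) ∧
    (∫ x in D2, d1 (convT G θ) x * d2 (convT G θ) x) = 0 ∧
    (Matrix.of fun i j =>
        ∫ x in D2, vc (Γ • gradPerp (convT G θ) x) i * vc (Γ • gradPerp (convT G θ) x) j)
      = (2 * ((1/4) * ∫ x in D2,
          ((Γ • gradPerp (convT G θ) x).1^2 + (Γ • gradPerp (convT G θ) x).2^2)))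
          • (1 : Matrix (Fin 2) (Fin 2) ℝ) := by
  set u := convT G θ with hu
  have husw : ∀ x : ℝ × ℝ, u (x.2, x.1) = u x := conv_swap hGs hθs
  have hun1 : ∀ x : ℝ × ℝ, u (-x.1, x.2) = u x := conv_neg1 hGs hθs
  -- derivative symmetries
  have hd1sw : ∀ x : ℝ × ℝ, d1 u x = d2 u (x.2, x.1) := fun x => (d_swap husw x).1
  have hd2sw : ∀ x : ℝ × ℝ, d2 u x = d1 u (x.2, x.1) := fun x => (d_swap husw x).2
  have hd1n : ∀ x : ℝ × ℝ, d1 u (-x.1, x.2) = - d1 u x := fun x => (d_neg1 hun1 x).1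
  have hd2n : ∀ x : ℝ × ℝ, d2 u (-x.1, x.2) = d2 u x := fun x => (d_neg1 hun1 x).2
  -- first statement
  have hA : (∫ x in D2, (d1 u x)^2) = ∫ x in D2, (d2 u x)^2 := by
    calc (∫ x in D2, (d1 u x)^2) = ∫ x in D2, (d2 u (x.2, x.1))^2 := by
          refine integral_congr_ae (Filter.Eventually.of_forall fun x => ?_)
          show (d1 u x)^2 = (d2 u (x.2, x.1))^2
          rw [hd1sw]
      _ = ∫ x in D2, (d2 u x)^2 := integral_D2_swap (fun x => (d2 u x)^2)
  -- second statement
  have hB : (∫ x in D2, d1 u x * d2 u x) = 0 := by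
    have h1 : (∫ x in D2, d1 u x * d2 u x)
        = ∫ x in D2, d1 u (-x.1, x.2) * d2 u (-x.1, x.2) :=
      (integral_D2_neg1 (fun x => d1 u x * d2 u x)).symm
    have h2 : (∫ x in D2, d1 u (-x.1, x.2) * d2 u (-x.1, x.2))
        = ∫ x in D2, -(d1 u x * d2 u x) := by
      refine integral_congr_ae (Filter.Eventually.of_forall fun x => ?_)
      show d1 u (-x.1, x.2) * d2 u (-x.1, x.2) = -(d1 u x * d2 u x)
      rw [hd1n, hd2n]; ring
    rw [integral_neg] at h2
    have := h1.trans h2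
    linarith
  refine ⟨hA, hB, ?_⟩
  -- matrix statement
  have hfst : ∀ x : ℝ × ℝ, (Γ • gradPerp u x).1 = Γ * d2 u x := fun x => rfl
  have hsnd : ∀ x : ℝ × ℝ, (Γ • gradPerp u x).2 = Γ * (- d1 u x) := fun x => rfl
  -- the off-diagonal integral
  have hoff : (∫ x in D2, (Γ * d2 u x) * (Γ * (- d1 u x))) = 0 := by
    have : (∫ x in D2, (Γ * d2 u x) * (Γ * (- d1 u x)))
        = ∫ x in D2, (-(Γ * Γ)) * (d1 u x * d2 u x) := by
      refine integral_congr_ae (Filter.Eventually.of_forall fun x => ?_)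
      ring
    rw [this, integral_const_mul, hB, mul_zero]
  -- diagonal integrals, rewritten with constants pulled out
  have hdiag1 : (∫ x in D2, (Γ * d2 u x) * (Γ * d2 u x))
      = (Γ * Γ) * ∫ x in D2, (d2 u x)^2 := by
    rw [← integral_const_mul _ _]
    refine integral_congr_ae (Filter.Eventually.of_forall fun x => ?_)
    ring
  have hdiag2 : (∫ x in D2, (Γ * (- d1 u x)) * (Γ * (- d1 u x)))
      = (Γ * Γ) * ∫ x in D2, (d1 u x)^2 := by
    rw [← integral_const_mul _ _]
    refine integral_congr_ae (Filter.Eventually.of_forall fun x => ?_)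
    ring
  -- value of the scalar
  have hscal : (2 * ((1/4) * ∫ x in D2,
      ((Γ • gradPerp u x).1^2 + (Γ • gradPerp u x).2^2)))
      = (Γ * Γ) * ∫ x in D2, (d2 u x)^2 := by
    have hrw : ∀ x : ℝ × ℝ, (Γ • gradPerp u x).1^2 + (Γ • gradPerp u x).2^2
        = (Γ * Γ) * (d2 u x)^2 + (Γ * Γ) * (d1 u x)^2 := by
      intro x; rw [hfst, hsnd]; ring
    by_cases hI : IntegrableOn (fun x => (d2 u x)^2) D2 volume
    · have hIf : IntegrableOn (fun x => (d1 u x)^2) D2 volume := by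
        have : (fun x : ℝ × ℝ => (d1 u x)^2) = fun x : ℝ × ℝ => (d2 u (x.2, x.1))^2 := by
          funext x; rw [hd1sw]
        rw [this]
        exact (integrableOn_D2_swap (fun x => (d2 u x)^2)).mpr hI
      have hsplit : (∫ x in D2, ((Γ • gradPerp u x).1^2 + (Γ • gradPerp u x).2^2))
          = (Γ * Γ) * (∫ x in D2, (d2 u x)^2) + (Γ * Γ) * (∫ x in D2, (d1 u x)^2) := by
        rw [show (fun x : ℝ × ℝ => (Γ • gradPerp u x).1^2 + (Γ • gradPerp u x).2^2)
            = fun x : ℝ × ℝ => (Γ * Γ) * (d2 u x)^2 + (Γ * Γ) * (d1 u x)^2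
          from funext hrw]
        rw [integral_add (hI.const_mul _) (hIf.const_mul _), integral_const_mul _ _,
          integral_const_mul _ _]
      rw [hsplit, hA]
      ring
    · -- the non-integrable case: everything is zero
      have hIf : ¬ IntegrableOn (fun x => (d1 u x)^2) D2 volume := by
        intro h
        apply hI
        have : (fun x : ℝ × ℝ => (d2 u x)^2) = fun x : ℝ × ℝ => (d1 u (x.2, x.1))^2 := by
          funext x; rw [hd2sw]
        rw [this]
        exact (integrableOn_D2_swap (fun x => (d1 u x)^2)).mpr h
      have hmeas : Measurable (fun x : ℝ × ℝ => (d2 u x)^2) :=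
        (measurable_fderiv_apply_const ℝ u ((0 : ℝ), (1 : ℝ))).pow_const 2
      have hbig : ¬ IntegrableOn
          (fun x => (Γ • gradPerp u x).1^2 + (Γ • gradPerp u x).2^2) D2 volume := by
        intro h
        apply hI
        have hΓΓ : 0 < Γ * Γ := mul_pos hΓ hΓ
        refine Integrable.mono' (g := fun x => (Γ * Γ)⁻¹ *
            ((Γ • gradPerp u x).1^2 + (Γ • gradPerp u x).2^2))
          (h.const_mul _) hmeas.aestronglyMeasurable
          (Filter.Eventually.of_forall fun x => ?_)
        rw [Real.norm_eq_abs, abs_of_nonneg (sq_nonneg _)]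
        show d2 u x ^ 2 ≤ (Γ * Γ)⁻¹ * ((Γ • gradPerp u x).1 ^ 2 + (Γ • gradPerp u x).2 ^ 2)
        rw [hrw x]
        have heq : (Γ * Γ)⁻¹ * (Γ * Γ * d2 u x ^ 2 + Γ * Γ * d1 u x ^ 2)
            = d2 u x ^ 2 + d1 u x ^ 2 := by
          field_simp
        rw [heq]
        nlinarith [sq_nonneg (d1 u x)]
      rw [integral_undef hbig, integral_undef hI]
      ring
  ext i j
  simp only [Matrix.of_apply, Matrix.smul_apply, Matrix.one_apply]
  have hv0 : ∀ x : ℝ × ℝ, vc (Γ • gradPerp u x) 0 = Γ * d2 u x := fun x => rfl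
  have hv1 : ∀ x : ℝ × ℝ, vc (Γ • gradPerp u x) 1 = Γ * (- d1 u x) := fun x => rfl
  fin_cases i <;> fin_cases j <;>
    simp only [hv0, hv1, if_true, if_false, smul_eq_mul, mul_one, mul_zero,
      Fin.mk_zero, Fin.mk_one, ne_eq, zero_ne_one, one_ne_zero, if_neg, reduceIte]
  · rw [hdiag1, hscal]
  · rw [hscal] at *
    rw [hoff]
  · have : (∫ x in D2, (Γ * (- d1 u x)) * (Γ * d2 u x))
        = ∫ x in D2, (Γ * d2 u x) * (Γ * (- d1 u x)) := by
      refine integral_congr_ae (Filter.Eventually.of_forall fun x => ?_); ring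
    rw [this, hoff]
  · rw [hdiag2, hscal, hA]
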